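/- arXiv:1401.5140 — 3 statements merged into one kernel-verified Lean document; each statement's English description precedes it below -/
import Mathlib

section
/- Let m ≥ 2 be an integer, ζ = exp(2πi/m), and let w be an integer with 0 < w < m and gcd(w, m) = 1. Then ∑_{k=1}^{m-1} (1 + ζ^{kw})/(1 - ζ^k) = w - 1. -/
/-!
Write `x = ζ ^ k`. Since `(1 + x ^ w) / (1 - x) = 2 / (1 - x) - (1 + x + ⋯ + x ^ (w - 1))`, the sum
splits into two pieces. Pairing `k` with `m - k` turns `1 / (1 - x)` into `1 / (1 - x⁻¹) = 1 - 1 / (1 - x)`,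
so `∑ 2 / (1 - ζ ^ k) = m - 1`. In the double sum, the power `j = 0` contributes `m - 1` and each
`0 < j < w ≤ m` contributes `-1`, because the full sum of `(ζ ^ j) ^ k` over `k < m` vanishes.
Hence the total is `(m - 1) - (m - w) = w - 1`.
-/

open Finset

theorem inv_one_sub_add_inv_one_sub_inv {K : Type*} [Field K] {x : K} (hx0 : x ≠ 0) (hx1 : x ≠ 1) :
    (1 - x)⁻¹ + (1 - x⁻¹)⁻¹ = 1 := by
  have : 1 - x ≠ 0 := sub_ne_zero.mpr hx1.symm
  have : x - 1 ≠ 0 := sub_ne_zero.mpr hx1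
  field_simp
  ring

theorem one_add_pow_div_one_sub_eq {K : Type*} [Field K] {x : K} (hx1 : x ≠ 1) (w : ℕ) :
    (1 + x ^ w) / (1 - x) = 2 * (1 - x)⁻¹ - ∑ j ∈ range w, x ^ j := by
  have h : 1 - x ≠ 0 := sub_ne_zero.mpr hx1.symm
  have hgeom := mul_neg_geom_sum x w
  field_simp
  linear_combination hgeom

namespace IsPrimitiveRoot

variable {K : Type*} [Field K] {ζ : K} {m : ℕ}

theorem pow_ne_one_of_mem_Ico (hζ : IsPrimitiveRoot ζ m) {k : ℕ} (hk : k ∈ Ico 1 m) :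
    ζ ^ k ≠ 1 :=
  hζ.pow_ne_one_of_pos_of_lt (by simp at hk; omega) (mem_Ico.mp hk).2

theorem two_mul_sum_Ico_inv_one_sub_pow (hζ : IsPrimitiveRoot ζ m) (hm : m ≠ 0) :
    2 * ∑ k ∈ Ico 1 m, (1 - ζ ^ k)⁻¹ = m - 1 := by
  have hreflect : ∑ k ∈ Ico 1 m, (1 - ζ ^ (m - k))⁻¹ = ∑ k ∈ Ico 1 m, (1 - ζ ^ k)⁻¹ := by
    simpa using sum_Ico_reflect (fun k => (1 - ζ ^ k)⁻¹) 1 (Nat.le_succ m)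
  have hpair : ∀ k ∈ Ico 1 m, (1 - ζ ^ k)⁻¹ + (1 - ζ ^ (m - k))⁻¹ = 1 := by
    intro k hk
    have hζ0 : ζ ≠ 0 := hζ.ne_zero hm
    rw [pow_sub₀ ζ hζ0 (mem_Ico.mp hk).2.le, hζ.pow_eq_one, one_mul]
    exact inv_one_sub_add_inv_one_sub_inv (pow_ne_zero _ hζ0) (hζ.pow_ne_one_of_mem_Ico hk)
  calc 2 * ∑ k ∈ Ico 1 m, (1 - ζ ^ k)⁻¹
      = ∑ k ∈ Ico 1 m, ((1 - ζ ^ k)⁻¹ + (1 - ζ ^ (m - k))⁻¹) := by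
        rw [sum_add_distrib, hreflect, two_mul]
    _ = m - 1 := by
        rw [sum_congr rfl hpair, sum_const, Nat.card_Ico, nsmul_one, Nat.cast_sub (Nat.one_le_iff_ne_zero.mpr hm), Nat.cast_one]

theorem sum_Ico_pow_pow_eq_neg_one (hζ : IsPrimitiveRoot ζ m) {j : ℕ} (hj : j ∈ Ico 1 m) :
    ∑ k ∈ Ico 1 m, (ζ ^ k) ^ j = -1 := by
  have hfull : ∑ k ∈ range m, (ζ ^ j) ^ k = 0 := by
    rw [geom_sum_eq (hζ.pow_ne_one_of_mem_Ico hj), ← pow_mul, mul_comm, pow_mul, hζ.pow_eq_one,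
      one_pow, sub_self, zero_div]
  rw [range_eq_Ico, sum_eq_sum_Ico_succ_bot (by simp at hj; omega)] at hfull
  simp only [pow_zero, zero_add, ← pow_mul, mul_comm j] at hfull
  simp only [← pow_mul]
  linear_combination hfull

theorem sum_Ico_geom_sum_pow (hζ : IsPrimitiveRoot ζ m) {w : ℕ} (hw0 : 0 < w) (hwm : w ≤ m) :
    ∑ k ∈ Ico 1 m, ∑ j ∈ range w, (ζ ^ k) ^ j = m - w := by
  rw [sum_comm, range_eq_Ico, sum_eq_sum_Ico_succ_bot hw0,
    sum_congr rfl fun j hj => hζ.sum_Ico_pow_pow_eq_neg_one (Ico_subset_Ico_right hwm hj)]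
  simp only [pow_zero, sum_const, Nat.card_Ico, nsmul_eq_mul, mul_one, mul_neg]
  push_cast [Nat.one_le_iff_ne_zero.mpr (by omega : m ≠ 0), hw0]
  ring

theorem sum_Ico_one_add_pow_mul_div_one_sub_pow (hζ : IsPrimitiveRoot ζ m) {w : ℕ} (hw0 : 0 < w)
    (hwm : w ≤ m) :
    ∑ k ∈ Ico 1 m, (1 + ζ ^ (k * w)) / (1 - ζ ^ k) = w - 1 := by
  calc ∑ k ∈ Ico 1 m, (1 + ζ ^ (k * w)) / (1 - ζ ^ k)
      = 2 * ∑ k ∈ Ico 1 m, (1 - ζ ^ k)⁻¹ - ∑ k ∈ Ico 1 m, ∑ j ∈ range w, (ζ ^ k) ^ j := by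
        rw [mul_sum, ← sum_sub_distrib]
        refine sum_congr rfl fun k hk => ?_
        rw [pow_mul, one_add_pow_div_one_sub_eq (hζ.pow_ne_one_of_mem_Ico hk)]
    _ = (m - 1) - (m - w) := by
        rw [hζ.two_mul_sum_Ico_inv_one_sub_pow (by omega), hζ.sum_Ico_geom_sum_pow hw0 hwm]
    _ = w - 1 := by ring

end IsPrimitiveRoot

theorem sum_one_add_zeta_pow_div_one_sub_zeta_pow_general
    (m w : ℕ) (hw0 : 0 < w) (hwm : w < m)
    (ζ : ℂ) (hζ : ζ = Complex.exp (2 * Real.pi * Complex.I / m)) :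
    ∑ k ∈ Finset.Ico 1 m, (1 + ζ ^ (k * w)) / (1 - ζ ^ k) = (w : ℂ) - 1 := by
  have hprim : IsPrimitiveRoot ζ m := hζ ▸ Complex.isPrimitiveRoot_exp m (by omega)
  exact hprim.sum_Ico_one_add_pow_mul_div_one_sub_pow hw0 hwm.le

/-- For `m ≥ 2`, `ζ = exp(2πi/m)` and `0 < w < m` with `gcd(w,m)=1`,
    `∑_{k=1}^{m-1} (1 + ζ^{kw})/(1 - ζ^k) = w - 1`. -/
theorem sum_one_add_zeta_pow_div_one_sub_zeta_pow
    (m w : ℕ) (hm : 2 ≤ m) (hw0 : 0 < w) (hwm : w < m) (hcop : Nat.Coprime w m)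
    (ζ : ℂ) (hζ : ζ = Complex.exp (2 * Real.pi * Complex.I / m)) :
    ∑ k ∈ Finset.Ico 1 m, (1 + ζ ^ (k * w)) / (1 - ζ ^ k) = (w : ℂ) - 1 :=
  sum_one_add_zeta_pow_div_one_sub_zeta_pow_general m w hw0 hwm ζ hζ
end

section
/- Let m ≥ 2 be an integer, ζ = exp(2πi/m), w an integer coprime to m with 0 < w < m, and let w' be the unique integer with 0 < w' < m and w·w' ≡ 1 (mod m). Then ∑_{k=1}^{m-1} (ζ^{2wk} + ζ^{2k} - 2)/((1 - ζ^k)(1 - ζ^{kw})) = -(w - 1) - (w' - 1) = 2 - w - w'. -/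
/-!
Since `ζ^{2wk} + ζ^{2k} - 2 = -(1 - ζ^{2wk}) - (1 - ζ^{2k})`, each term splits as
`-(1 + ζ^{wk})/(1 - ζ^k) - (1 + ζ^k)/(1 - ζ^{wk})`. With `η = ζ^w`, again a primitive
`m`-th root of unity, and `ζ = η^{w'}`, both halves are instances of
`∑_{k=1}^{m-1} (1 + ζ^{ak})/(1 - ζ^k) = a - 1` for `0 < a ≤ m`. This holds for `a = 1`
because `k ↦ m - k` turns `(1 + ζ^k)/(1 - ζ^k)` into its negative, and passing from `a`
to `a + 1` adds `-∑_{k=1}^{m-1} ζ^{ak} = 1`.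
-/

open Finset

variable {K : Type*} [Field K]

lemma sum_Ico_one_pow_eq_neg_one {x : K} {m : ℕ} (hm : 0 < m) (hxm : x ^ m = 1) (hx : x ≠ 1) :
    ∑ k ∈ Ico 1 m, x ^ k = -1 := by
  have h := geom_sum_eq hx m
  rw [hxm, sub_self, zero_div, range_eq_Ico, sum_eq_sum_Ico_succ_bot hm, pow_zero] at h
  linear_combination h

lemma sq_add_sq_sub_two_div_mul {x y : K} (hx : 1 - x ≠ 0) (hy : 1 - y ≠ 0) :
    (y ^ 2 + x ^ 2 - 2) / ((1 - x) * (1 - y)) = -((1 + y) / (1 - x)) - (1 + x) / (1 - y) := by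
  field_simp
  ring

lemma one_add_div_one_sub_of_mul_eq_one {x y : K} (hxy : y * x = 1) :
    (1 + y) / (1 - y) = -((1 + x) / (1 - x)) := by
  obtain rfl := eq_inv_of_mul_eq_one_left hxy
  have hx0 : x ≠ 0 := by rintro rfl; simp at hxy
  rw [← mul_div_mul_right _ _ hx0, add_mul, sub_mul, inv_mul_cancel₀ hx0, one_mul,
    ← neg_div_neg_eq, neg_sub, neg_div, add_comm]

namespace IsPrimitiveRoot

variable {ζ : K} {m : ℕ}

lemma one_sub_pow_ne_zero (hζ : IsPrimitiveRoot ζ m) {k : ℕ} (hk : k ∈ Ico 1 m) :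
    1 - ζ ^ k ≠ 0 := by
  rw [mem_Ico] at hk
  exact sub_ne_zero.mpr (hζ.pow_ne_one_of_pos_of_lt (by omega) hk.2).symm

lemma sum_one_add_pow_div_one_sub_pow_eq_zero [CharZero K] (hζ : IsPrimitiveRoot ζ m) :
    ∑ k ∈ Ico 1 m, (1 + ζ ^ k) / (1 - ζ ^ k) = 0 := by
  set f : ℕ → K := fun k ↦ (1 + ζ ^ k) / (1 - ζ ^ k)
  have hreflect : ∑ k ∈ Ico 1 m, f (m - k) = ∑ k ∈ Ico 1 m, f k := by
    rw [sum_Ico_reflect f 1 (Nat.le_succ m), Nat.add_sub_cancel_left, Nat.add_sub_cancel]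
  have hanti : ∀ k ∈ Ico 1 m, f (m - k) = -f k := fun k hk ↦
    one_add_div_one_sub_of_mul_eq_one <| by
      rw [← pow_add, Nat.sub_add_cancel (mem_Ico.mp hk).2.le, hζ.pow_eq_one]
  rw [sum_congr rfl hanti, sum_neg_distrib] at hreflect
  exact CharZero.eq_neg_self_iff.mp hreflect.symm

lemma sum_one_add_pow_succ_mul_div_one_sub_pow (hζ : IsPrimitiveRoot ζ m) {a : ℕ}
    (ha : 0 < a) (ham : a < m) :
    ∑ k ∈ Ico 1 m, (1 + ζ ^ ((a + 1) * k)) / (1 - ζ ^ k) =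
      ∑ k ∈ Ico 1 m, (1 + ζ ^ (a * k)) / (1 - ζ ^ k) + 1 := by
  have hterm : ∀ k ∈ Ico 1 m, (1 + ζ ^ ((a + 1) * k)) / (1 - ζ ^ k) =
      (1 + ζ ^ (a * k)) / (1 - ζ ^ k) - (ζ ^ a) ^ k := by
    intro k hk
    have := hζ.one_sub_pow_ne_zero hk
    rw [add_mul, one_mul, pow_add, pow_mul]
    field_simp
    ring
  have hpow : (ζ ^ a) ^ m = 1 := by rw [pow_right_comm, hζ.pow_eq_one, one_pow]
  rw [sum_congr rfl hterm, sum_sub_distrib,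
    sum_Ico_one_pow_eq_neg_one (ha.trans ham) hpow (hζ.pow_ne_one_of_pos_of_lt ha.ne' ham)]
  ring

theorem sum_one_add_pow_mul_div_one_sub_pow [CharZero K] (hζ : IsPrimitiveRoot ζ m) {a : ℕ}
    (ha : 0 < a) (ham : a ≤ m) :
    ∑ k ∈ Ico 1 m, (1 + ζ ^ (a * k)) / (1 - ζ ^ k) = a - 1 := by
  induction a, ha using Nat.le_induction with
  | base => simpa using hζ.sum_one_add_pow_div_one_sub_pow_eq_zero
  | succ a ha ih =>
    rw [hζ.sum_one_add_pow_succ_mul_div_one_sub_pow ha ham, ih (by omega)]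
    push_cast
    ring

end IsPrimitiveRoot

theorem sum_zeta_identity_two_sub_w_sub_w'_general
    (m w w' : ℕ) (hw0 : 0 < w) (hwm : w < m) (hcop : Nat.Coprime w m)
    (hw'0 : 0 < w') (hw'm : w' < m) (hww' : w * w' ≡ 1 [MOD m])
    (ζ : ℂ) (hζ : ζ = Complex.exp (2 * Real.pi * Complex.I / m)) :
    ∑ k ∈ Finset.Ico 1 m,
      (ζ ^ (2 * w * k) + ζ ^ (2 * k) - 2) / ((1 - ζ ^ k) * (1 - ζ ^ (k * w))) =
      2 - (w : ℂ) - (w' : ℂ) := by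
  have hζm : IsPrimitiveRoot ζ m := hζ ▸ Complex.isPrimitiveRoot_exp m (by omega)
  have hηm : IsPrimitiveRoot (ζ ^ w) m := hζm.pow_of_coprime w hcop
  have hηw' : (ζ ^ w) ^ w' = ζ := by
    rw [← pow_mul, pow_eq_pow_of_modEq hww' hζm.pow_eq_one, pow_one]
  have hterm : ∀ k ∈ Ico 1 m,
      (ζ ^ (2 * w * k) + ζ ^ (2 * k) - 2) / ((1 - ζ ^ k) * (1 - ζ ^ (k * w))) =
        -((1 + ζ ^ (w * k)) / (1 - ζ ^ k)) - (1 + (ζ ^ w) ^ (w' * k)) / (1 - (ζ ^ w) ^ k) := by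
    intro k hk
    have hx : (ζ ^ w) ^ (w' * k) = ζ ^ k := by rw [pow_mul, hηw']
    rw [hx, show ζ ^ (k * w) = (ζ ^ w) ^ k by ring, show ζ ^ (w * k) = (ζ ^ w) ^ k by ring,
      show ζ ^ (2 * w * k) = ((ζ ^ w) ^ k) ^ 2 by ring, show ζ ^ (2 * k) = (ζ ^ k) ^ 2 by ring]
    exact sq_add_sq_sub_two_div_mul (hζm.one_sub_pow_ne_zero hk) (hηm.one_sub_pow_ne_zero hk)
  rw [sum_congr rfl hterm, sum_sub_distrib, sum_neg_distrib,
    hζm.sum_one_add_pow_mul_div_one_sub_pow hw0 hwm.le,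
    hηm.sum_one_add_pow_mul_div_one_sub_pow hw'0 hw'm.le]
  ring

/-- For `m ≥ 2`, `ζ = exp(2πi/m)`, `w` coprime to `m` with `0 < w < m`,
    and `w'` the inverse of `w` mod `m` with `0 < w' < m`,
    `∑_{k=1}^{m-1} (ζ^{2wk} + ζ^{2k} - 2)/((1-ζ^k)(1-ζ^{kw})) = 2 - w - w'`. -/
theorem sum_zeta_identity_two_sub_w_sub_w'
    (m w w' : ℕ) (hm : 2 ≤ m) (hw0 : 0 < w) (hwm : w < m) (hcop : Nat.Coprime w m)
    (hw'0 : 0 < w') (hw'm : w' < m) (hww' : w * w' ≡ 1 [MOD m])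
    (ζ : ℂ) (hζ : ζ = Complex.exp (2 * Real.pi * Complex.I / m)) :
    ∑ k ∈ Finset.Ico 1 m,
      (ζ ^ (2 * w * k) + ζ ^ (2 * k) - 2) / ((1 - ζ ^ k) * (1 - ζ ^ (k * w))) =
      2 - (w : ℂ) - (w' : ℂ) :=
  sum_zeta_identity_two_sub_w_sub_w'_general m w w' hw0 hwm hcop hw'0 hw'm hww' ζ hζ
end

section
/- For integers m ≥ 2 and w with 0 < w < m and gcd(w, m) = 1, define the Dedekind sum s(w; m) = (1/(4m)) ∑_{k=1}^{m-1} cot(πk/m) cot(πkw/m). Then 6m·s(w; m) is an integer. -/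
/-- The Dedekind sum `s(w; m) = (1/(4m)) ∑_{k=1}^{m-1} cot(πk/m) cot(πkw/m)`. -/
noncomputable def dedekindSum (w m : ℕ) : ℝ :=
  (1 / (4 * (m : ℝ))) *
    ∑ k ∈ Finset.Ico 1 m,
      Real.cot (Real.pi * k / m) * Real.cot (Real.pi * (k * w) / m)

/-!
With `ζ = exp (2πi/m)` and `m ∤ j`,
`cot (πj/m) = i (ζʲ + 1)/(ζʲ - 1) = i (1 + (2/m) ∑_{a<m} a ζʲᵃ)`,
a finite Fourier expansion of the cotangent. Multiplying two such expansions and summing over `k`,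
orthogonality of the characters `k ↦ ζᵏʲ` leaves
`∑_{0<k<m} cot (πk/m) cot (πkw/m) = m² - m - (4/m) ∑_{b<m} b rᵦ`,
where `rᵦ ∈ [0, m)` is the residue of `-wb`. Modulo `m`, `∑ b rᵦ ≡ -w ∑ b²` and
`6 ∑_{b<m} b² = m(m-1)(2m-1)`, so `m ∣ 6 ∑ b rᵦ`; as `m(m-1)` is even,
`6m s(w; m) = 3 m(m-1)/2 - 6 (∑ b rᵦ)/m` is an integer.
-/

open Finset Complex Real

def arithGeomSum {R : Type*} [Semiring R] (x : R) (n : ℕ) : R :=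
  ∑ a ∈ range n, (a : R) * x ^ a

section CommRing

variable {R : Type*} [CommRing R]

theorem sub_one_mul_arithGeomSum (x : R) (n : ℕ) :
    (x - 1) * arithGeomSum x n = n * x ^ n - x * ∑ a ∈ range n, x ^ a := by
  induction n with
  | zero => simp [arithGeomSum]
  | succ n ih =>
    rw [arithGeomSum, sum_range_succ, sum_range_succ, ← arithGeomSum]
    push_cast
    linear_combination ih

theorem arithGeomSum_one_mul_two (n : ℕ) : arithGeomSum (1 : R) n * 2 = n * (n - 1) := by
  induction n with
  | zero => simp [arithGeomSum]
  | succ n ih =>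
    rw [arithGeomSum, sum_range_succ, ← arithGeomSum]
    push_cast
    linear_combination ih

theorem six_mul_sum_range_sq (n : ℕ) :
    6 * ∑ i ∈ range n, (i : R) ^ 2 = n * (n - 1) * (2 * n - 1) := by
  induction n with
  | zero => simp
  | succ n ih =>
    rw [sum_range_succ]
    push_cast
    linear_combination ih

end CommRing

theorem arithGeomSum_eq_div {K : Type*} [Field K] {x : K} {n : ℕ} (hxn : x ^ n = 1)
    (hx : x ≠ 1) : arithGeomSum x n = n / (x - 1) := by
  have hgeom : ∑ a ∈ range n, x ^ a = 0 := by rw [geom_sum_eq hx, hxn, sub_self, zero_div]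
  rw [eq_div_iff (sub_ne_zero.mpr hx), mul_comm, sub_one_mul_arithGeomSum, hgeom, hxn]
  ring

def sumMulNegResidue (w m : ℕ) : ℕ :=
  ∑ b ∈ range m, (-(w * b : ZMod m)).val * b

theorem dvd_add_iff_eq_val_neg {m a : ℕ} [NeZero m] (ha : a < m) (c : ℕ) :
    m ∣ a + c ↔ a = (-(c : ZMod m)).val := by
  rw [← ZMod.natCast_eq_zero_iff, Nat.cast_add, add_eq_zero_iff_eq_neg]
  constructor
  · intro h
    rw [← h, ZMod.val_natCast_of_lt ha]
  · rintro rfl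
    exact ZMod.natCast_zmod_val _

namespace IsPrimitiveRoot

variable {K : Type*} [Field K] {ζ : K} {m : ℕ}

theorem sum_pow_mul_eq_ite (hζ : IsPrimitiveRoot ζ m) (j : ℕ) :
    ∑ k ∈ range m, ζ ^ (k * j) = if m ∣ j then (m : K) else 0 := by
  simp_rw [mul_comm _ j, pow_mul]
  split_ifs with hj
  · simp [hζ.pow_eq_one_iff_dvd j |>.mpr hj]
  · rw [geom_sum_eq (mt (hζ.pow_eq_one_iff_dvd j).mp hj), ← pow_mul, mul_comm, pow_mul,
      hζ.pow_eq_one, one_pow, sub_self, zero_div]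

theorem sum_arithGeomSum_pow_mul_eq_zero (hζ : IsPrimitiveRoot ζ m) {w : ℕ}
    (hw : w.Coprime m) : ∑ k ∈ range m, arithGeomSum (ζ ^ (k * w)) m = 0 := by
  simp_rw [arithGeomSum, ← pow_mul, mul_assoc]
  rw [sum_comm]
  refine sum_eq_zero fun a ha ↦ ?_
  rw [← mul_sum, hζ.sum_pow_mul_eq_ite]
  split_ifs with hdvd
  · rw [Nat.eq_zero_of_dvd_of_lt (hw.symm.dvd_of_dvd_mul_left hdvd) (mem_range.mp ha)]
    simp
  · rw [mul_zero]

theorem sum_arithGeomSum_mul_arithGeomSum (hζ : IsPrimitiveRoot ζ m) [NeZero m] (w : ℕ) :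
    ∑ k ∈ range m, arithGeomSum (ζ ^ k) m * arithGeomSum (ζ ^ (k * w)) m =
      m * (sumMulNegResidue w m : K) := by
  have hterm (b a : ℕ) (ha : a < m) :
      ∑ k ∈ range m, (b : K) * (ζ ^ (k * w)) ^ b * ((a : K) * (ζ ^ k) ^ a) =
        if a = (-(w * b : ZMod m)).val then (a * b * m : K) else 0 := by
    have hexp (k : ℕ) : (ζ ^ (k * w)) ^ b * (ζ ^ k) ^ a = ζ ^ (k * (a + w * b)) := by
      rw [← pow_mul, ← pow_mul, ← pow_add]
      congr 1
      ring
    calc _ = a * b * ∑ k ∈ range m, ζ ^ (k * (a + w * b)) := by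
          rw [mul_sum]
          exact sum_congr rfl fun k _ ↦ by rw [← hexp k]; ring
      _ = _ := by
          simp only [hζ.sum_pow_mul_eq_ite, dvd_add_iff_eq_val_neg ha, Nat.cast_mul, mul_ite,
            mul_zero]
  calc _ = ∑ b ∈ range m, ∑ a ∈ range m, ∑ k ∈ range m,
          (b : K) * (ζ ^ (k * w)) ^ b * ((a : K) * (ζ ^ k) ^ a) := by
        conv_lhs => enter [2, k]; rw [mul_comm, arithGeomSum, arithGeomSum, sum_mul_sum]
        rw [sum_comm]
        exact sum_congr rfl fun _ _ ↦ sum_comm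
    _ = _ := by
      rw [sum_congr rfl fun b _ ↦ sum_congr rfl fun a ha ↦ hterm b a (mem_range.mp ha)]
      simp only [sum_ite_eq', mem_range, ZMod.val_lt, if_true, sumMulNegResidue, Nat.cast_sum,
        Nat.cast_mul, mul_sum]
      exact sum_congr rfl fun _ _ ↦ by ring

theorem add_one_div_sub_one_eq_one_add_arithGeomSum (hζ : IsPrimitiveRoot ζ m)
    (hm : (m : K) ≠ 0) {j : ℕ} (hj : ¬ m ∣ j) :
    (ζ ^ j + 1) / (ζ ^ j - 1) = 1 + 2 / m * arithGeomSum (ζ ^ j) m := by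
  have hζj : ζ ^ j ≠ 1 := mt (hζ.pow_eq_one_iff_dvd j).mp hj
  rw [arithGeomSum_eq_div (by rw [pow_right_comm, hζ.pow_eq_one, one_pow]) hζj]
  field_simp [sub_ne_zero.mpr hζj]
  ring

theorem sum_Ico_add_one_div_sub_one_mul_add_one_div_sub_one (hζ : IsPrimitiveRoot ζ m)
    (hm : (m : K) ≠ 0) {w : ℕ} (hw : w.Coprime m) :
    ∑ k ∈ Ico 1 m, (ζ ^ k + 1) / (ζ ^ k - 1) * ((ζ ^ (k * w) + 1) / (ζ ^ (k * w) - 1)) =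
      m + 4 / m * (sumMulNegResidue w m : K) - m ^ 2 := by
  have : NeZero m := ⟨by rintro rfl; simp at hm⟩
  -- Completing the sum with `k = 0` makes the orthogonality relations apply; that term is `m²`.
  set f : ℕ → K := fun j ↦ 1 + 2 / m * arithGeomSum (ζ ^ j) m with hf
  have hf0 : f 0 = m := by
    have hsum_one := arithGeomSum_one_mul_two (R := K) m
    simp only [hf, pow_zero]
    field_simp
    linear_combination hsum_one
  have hsum : ∑ k ∈ range m, f k * f (k * w) =
      m + 4 / m * (sumMulNegResidue w m : K) := by
    have hsum_k := hζ.sum_arithGeomSum_pow_mul_eq_zero (Nat.coprime_one_left m)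
    simp only [mul_one] at hsum_k
    have hsum_kw := hζ.sum_arithGeomSum_pow_mul_eq_zero hw
    have hprod := hζ.sum_arithGeomSum_mul_arithGeomSum w
    have hexpand (k : ℕ) : f k * f (k * w) = 1 + 2 / m * arithGeomSum (ζ ^ k) m +
        2 / m * arithGeomSum (ζ ^ (k * w)) m +
        4 / m ^ 2 * (arithGeomSum (ζ ^ k) m * arithGeomSum (ζ ^ (k * w)) m) := by
      simp only [hf]
      ring
    simp only [hexpand, sum_add_distrib, ← mul_sum, sum_const, card_range, nsmul_one, hsum_k,
      hsum_kw, hprod]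
    field_simp
    ring
  have hIco : ∀ k ∈ Ico 1 m,
      (ζ ^ k + 1) / (ζ ^ k - 1) * ((ζ ^ (k * w) + 1) / (ζ ^ (k * w) - 1)) = f k * f (k * w) := by
    intro k hk
    obtain ⟨hk1, hkm⟩ := mem_Ico.mp hk
    have hk : ¬ m ∣ k := fun h ↦ (Nat.le_of_dvd hk1 h).not_gt hkm
    rw [hζ.add_one_div_sub_one_eq_one_add_arithGeomSum hm hk,
      hζ.add_one_div_sub_one_eq_one_add_arithGeomSum hm
        (fun h ↦ hk (hw.symm.dvd_of_dvd_mul_right h))]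
  rw [sum_congr rfl hIco, ← hsum, range_eq_Ico, sum_eq_sum_Ico_succ_bot (Nat.pos_of_neZero m),
    zero_mul, hf0]
  ring

end IsPrimitiveRoot

theorem Complex.cot_pi_mul_natCast_div (j m : ℕ) :
    Complex.cot (π * j / m) =
      I * ((exp (2 * π * I / m) ^ j + 1) / (exp (2 * π * I / m) ^ j - 1)) := by
  rw [mul_div_assoc, cot_pi_eq_exp_ratio, ← exp_nat_mul, mul_div_assoc', mul_comm (j : ℂ),
    div_mul_eq_mul_div]
  rw [div_eq_mul_inv, mul_inv, inv_I, ← neg_sub (exp _) 1, inv_neg]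
  ring

theorem sum_cot_mul_cot {m w : ℕ} (hm : m ≠ 0) (hw : w.Coprime m) :
    ∑ k ∈ Ico 1 m, Real.cot (π * k / m) * Real.cot (π * (k * w) / m) =
      m ^ 2 - m - 4 / m * (sumMulNegResidue w m : ℝ) := by
  set ζ := exp (2 * π * I / m)
  have hζ : IsPrimitiveRoot ζ m := isPrimitiveRoot_exp m hm
  apply ofReal_injective
  push_cast [ofReal_cot]
  calc _ = -∑ k ∈ Ico 1 m,
        (ζ ^ k + 1) / (ζ ^ k - 1) * ((ζ ^ (k * w) + 1) / (ζ ^ (k * w) - 1)) := by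
        rw [← sum_neg_distrib]
        refine sum_congr rfl fun k _ ↦ ?_
        rw [← Nat.cast_mul, cot_pi_mul_natCast_div, cot_pi_mul_natCast_div, mul_mul_mul_comm,
          I_mul_I, neg_one_mul]
    _ = _ := by
        rw [hζ.sum_Ico_add_one_div_sub_one_mul_add_one_div_sub_one (Nat.cast_ne_zero.mpr hm) hw]
        ring

theorem dvd_six_mul_sumMulNegResidue (m w : ℕ) [NeZero m] :
    m ∣ 6 * sumMulNegResidue w m := by
  rw [← ZMod.natCast_eq_zero_iff, sumMulNegResidue]
  push_cast
  simp only [ZMod.natCast_zmod_val]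
  calc _ = -(w : ZMod m) * (6 * ∑ b ∈ range m, (b : ZMod m) ^ 2) := by
        rw [mul_sum, mul_sum, mul_sum]
        exact sum_congr rfl fun _ _ ↦ by ring
    _ = 0 := by rw [six_mul_sum_range_sq, ZMod.natCast_self]; ring

theorem six_m_mul_dedekindSum_isInt_general
    (m w : ℕ) (hm : 2 ≤ m) (hcop : Nat.Coprime w m) :
    ∃ z : ℤ, 6 * (m : ℝ) * dedekindSum w m = (z : ℝ) := by
  have : NeZero m := ⟨by omega⟩
  obtain ⟨t, ht⟩ := dvd_six_mul_sumMulNegResidue m w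
  obtain ⟨u, hu⟩ := Int.even_mul_pred_self m
  have htR : 6 * (sumMulNegResidue w m : ℝ) = m * t := by exact_mod_cast ht
  have huR : (m : ℝ) * (m - 1) = u + u := by exact_mod_cast hu
  refine ⟨3 * u - t, ?_⟩
  rw [dedekindSum, sum_cot_mul_cot (NeZero.ne m) hcop]
  field_simp
  push_cast
  linear_combination 6 * (m : ℝ) * huR - 4 * htR

/-- For `m ≥ 2` and `0 < w < m` with `gcd(w,m)=1`,
    `6m·s(w;m)` is an integer. -/
theorem six_m_mul_dedekindSum_isInt
    (m w : ℕ) (hm : 2 ≤ m) (hw0 : 0 < w) (hwm : w < m) (hcop : Nat.Coprime w m) :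
    ∃ z : ℤ, 6 * (m : ℝ) * dedekindSum w m = (z : ℝ) :=
  six_m_mul_dedekindSum_isInt_general m w hm hcop
end
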